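/- arXiv:hep-th/0503106 — 7 statements merged into one kernel-verified Lean document; each statement's English description precedes it below -/
import Mathlib

section
/- Let 𝕆 denote the octonions. For every purely imaginary octonion a (i.e. a + a* = 0) and all octonions x, y, the first Moufang identity holds: (a·x)·(y·a) = a·((x·y)·a), equivalently (a·x)·(y·a) = (a·(x·y))·a. -/
set_option maxHeartbeats 4000000


noncomputable section

/-- The octonions, realized as pairs of quaternions. -/
abbrev Octonion := Quaternion ℝ × Quaternion ℝ

/-- Octonion multiplication: (α₁,α₂)·(β₁,β₂) = (α₁β₁ − β̄₂α₂, β₂α₁ + α₂β̄₁). -/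
def omul (a b : Octonion) : Octonion :=
  (a.1 * b.1 - star b.2 * a.2, b.2 * a.1 + a.2 * star b.1)

/-- Octonion conjugation: (α₁,α₂)* = (ᾱ₁, −α₂). -/
def oconj (a : Octonion) : Octonion := (star a.1, -a.2)

/-- The unit octonion 1 = (1,0). -/
def oone : Octonion := ((1 : Quaternion ℝ), (0 : Quaternion ℝ))

/-- An octonion is purely imaginary if a + a* = 0. -/
def IsPurelyImaginary (a : Octonion) : Prop := a + oconj a = 0

/-- The squared Euclidean norm ‖(α₁,α₂)‖² = ‖α₁‖² + ‖α₂‖². -/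
def onormSq (a : Octonion) : ℝ := ‖a.1‖ ^ 2 + ‖a.2‖ ^ 2

/-- The Euclidean norm of an octonion. -/
def onorm (a : Octonion) : ℝ := Real.sqrt (onormSq a)

/-- An octonion is unitary if its Euclidean norm equals 1. -/
def IsUnitary (a : Octonion) : Prop := onorm a = 1
/-- First Moufang identity: for purely imaginary a, (a·x)·(y·a) = a·((x·y)·a),
equivalently (a·x)·(y·a) = (a·(x·y))·a. -/
theorem moufang_one (a : Octonion) (ha : IsPurelyImaginary a) (x y : Octonion) :
    omul (omul a x) (omul y a) = omul a (omul (omul x y) a) ∧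
    omul (omul a x) (omul y a) = omul (omul a (omul x y)) a := by
  have h1 : a.1.re = 0 := by
    have := congrArg (fun p => p.1.re) ha
    simp [oconj] at this
    change a.1.re + a.1.re = 0 at this
    linarith
  obtain ⟨a1, a2⟩ := a
  simp only at h1
  constructor <;> refine Prod.ext ?_ ?_ <;>
  · simp only [omul]
    ext <;>
      simp only [Quaternion.re_mul, Quaternion.imI_mul, Quaternion.imJ_mul, Quaternion.imK_mul,
        Quaternion.re_sub, Quaternion.imI_sub, Quaternion.imJ_sub, Quaternion.imK_sub,
        Quaternion.re_add, Quaternion.imI_add, Quaternion.imJ_add, Quaternion.imK_add,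
        Quaternion.re_star, Quaternion.imI_star, Quaternion.imJ_star, Quaternion.imK_star,
        h1] <;> ring
end
end

section
/- Let 𝕆 denote the octonions. For all octonions a, x, y, the second Moufang identity holds: a·(x·(a·y)) = ((a·x)·a)·y. -/
noncomputable section

/-!
The octonions are the Cayley–Dickson double of ℍ. In ℍ the trace `z + z̄` and the norm `z̄ z` are
real, hence central, and these two facts (with their consequence `t(xy) = t(yx)`) are all that the
Moufang identity needs: in each component of the doubled product the two sides differ by a sum of
commutators of traces and norms.
-/

namespace CayleyDickson

variable {R : Type*} [Ring R] [StarRing R]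

def mul (a b : R × R) : R × R :=
  (a.1 * b.1 - star b.2 * a.2, b.2 * a.1 + a.2 * star b.1)

theorem commute_star_self (htrace : ∀ z w : R, Commute (z + star z) w) (z : R) :
    Commute (star z) z := by
  have h := (htrace z z).eq
  rw [add_mul, mul_add, add_right_inj] at h
  exact h

theorem trace_mul_comm (htrace : ∀ z w : R, Commute (z + star z) w) (x y : R) :
    x * y + star (x * y) = y * x + star (y * x) := by
  rw [star_mul, star_mul]
  linear_combination (norm := noncomm_ring)
    (htrace y (x + star x)).eq + (htrace x y).eq - (htrace y x).eq

theorem moufang_fst (htrace : ∀ z w : R, Commute (z + star z) w)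
    (hnorm : ∀ z w : R, Commute (star z * z) w) (a x y : R × R) :
    (mul a (mul x (mul a y))).1 = (mul (mul (mul a x) a) y).1 := by
  obtain ⟨p, q⟩ := a
  obtain ⟨r, s⟩ := x
  obtain ⟨u, v⟩ := y
  simp only [mul, star_sub, star_add, star_mul, star_star]
  linear_combination (norm := (simp only [star_mul, star_star]; noncomm_ring))
    (htrace (star q * s) (p * u)).eq + (hnorm q (star r * u)).eq
      - (htrace (p * r) (star v * q)).eq - (hnorm (star p) (star v * s)).eq

theorem moufang_snd (htrace : ∀ z w : R, Commute (z + star z) w)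
    (hnorm : ∀ z w : R, Commute (star z * z) w) (a x y : R × R) :
    (mul a (mul x (mul a y))).2 = (mul (mul (mul a x) a) y).2 := by
  obtain ⟨p, q⟩ := a
  obtain ⟨r, s⟩ := x
  obtain ⟨u, v⟩ := y
  simp only [mul, star_sub, star_add, star_mul, star_star]
  linear_combination (norm := (simp only [star_mul, star_star]; noncomm_ring))
    q * (trace_mul_comm htrace r p * star u - (htrace (r * p) (star u)).eq)
      - s * ((hnorm p (star u)).eq - (commute_star_self htrace p).eq * star u)
      + (trace_mul_comm htrace (star s) q * v - (htrace (star s * q) v).eq) * p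
      - ((hnorm (star q) v).eq - v * (commute_star_self htrace q).eq) * star r

theorem moufang (htrace : ∀ z w : R, Commute (z + star z) w)
    (hnorm : ∀ z w : R, Commute (star z * z) w) (a x y : R × R) :
    mul a (mul x (mul a y)) = mul (mul (mul a x) a) y :=
  Prod.ext (moufang_fst htrace hnorm a x y) (moufang_snd htrace hnorm a x y)

end CayleyDickson

theorem Quaternion.commute_self_add_star {R : Type*} [CommRing R] (z w : Quaternion R) :
    Commute (z + star z) w := by
  rw [Quaternion.self_add_star']
  exact Quaternion.coe_commute _ w

theorem Quaternion.commute_star_mul_self {R : Type*} [CommRing R] (z w : Quaternion R) :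
    Commute (star z * z) w := by
  rw [Quaternion.star_mul_self]
  exact Quaternion.coe_commute _ w

/-- Second Moufang identity: a·(x·(a·y)) = ((a·x)·a)·y. -/
theorem moufang_two (a x y : Octonion) :
    omul a (omul x (omul a y)) = omul (omul (omul a x) a) y :=
  CayleyDickson.moufang Quaternion.commute_self_add_star Quaternion.commute_star_mul_self a x y
end
end

section
/- Let 𝕆 denote the octonions, equipped with the Euclidean norm ‖(α₁,α₂)‖² = ‖α₁‖² + ‖α₂‖² inherited from ℝ⁸. The octonions form a normed (composition) algebra: for all octonions a, b, one has ‖a·b‖ = ‖a‖·‖b‖. -/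
noncomputable section

/-- The octonions form a normed (composition) algebra: ‖a·b‖ = ‖a‖·‖b‖. -/
theorem octonion_norm_mul (a b : Octonion) :
    onorm (omul a b) = onorm a * onorm b := by
  have key : onormSq (omul a b) = onormSq a * onormSq b := by
    simp only [onormSq, omul]
    simp only [sq, ← Quaternion.normSq_eq_norm_mul_self]
    simp only [Quaternion.normSq_def', Quaternion.re_mul, Quaternion.imI_mul, Quaternion.imJ_mul,
      Quaternion.imK_mul, Quaternion.re_sub, Quaternion.imI_sub, Quaternion.imJ_sub,
      Quaternion.imK_sub, Quaternion.re_add, Quaternion.imI_add, Quaternion.imJ_add,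
      Quaternion.imK_add, Quaternion.re_star, Quaternion.imI_star, Quaternion.imJ_star,
      Quaternion.imK_star]
    ring
  have h : ∀ x : Octonion, 0 ≤ onormSq x := fun x => add_nonneg (sq_nonneg _) (sq_nonneg _)
  rw [onorm, onorm, onorm, key, Real.sqrt_mul (h a)]
end
end

section
/- Let 𝕆 denote the octonions. For every purely imaginary octonion a of norm 1 and all octonions x, y, one has (a·x)·(a·y) = a·((x·a)·y). (This is the base case n = 1 of the key induction in the proof of Proposition 1 of the paper.) -/
noncomputable section

/-!
Writing `a = (α₁, α₂)`, the condition `a + a* = 0` says exactly that `Re α₁ = 0`, with no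
constraint on `α₂`. In the sixteen real coordinates of `a`, `x`, `y` both sides of the identity
are polynomials, and they coincide once `Re α₁ = 0`.
-/

theorem IsPurelyImaginary.fst_re_eq_zero {a : Octonion} (ha : IsPurelyImaginary a) :
    a.1.re = 0 := by
  have h_re := congrArg (fun z : Octonion => z.1.re) ha
  simp only [oconj, Prod.fst_add, Quaternion.re_add, Quaternion.re_star, Prod.fst_zero,
    Quaternion.re_zero] at h_re
  linarith

theorem base_case_induction_general (a : Octonion)
    (ha' : IsPurelyImaginary a) (x y : Octonion) :
    omul (omul a x) (omul a y) = omul a (omul (omul x a) y) := by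
  have h_re : a.1.re = 0 := ha'.fst_re_eq_zero
  ext <;>
  simp only [omul, Quaternion.re_mul, Quaternion.imI_mul, Quaternion.imJ_mul, Quaternion.imK_mul,
    Quaternion.re_sub, Quaternion.imI_sub, Quaternion.imJ_sub, Quaternion.imK_sub,
    Quaternion.re_add, Quaternion.imI_add, Quaternion.imJ_add, Quaternion.imK_add,
    Quaternion.re_star, Quaternion.imI_star, Quaternion.imJ_star, Quaternion.imK_star, h_re] <;>
  ring

/-- For a unitary purely imaginary octonion a and all octonions x, y:
(a·x)·(a·y) = a·((x·a)·y). -/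
theorem base_case_induction (a : Octonion) (ha : IsUnitary a)
    (ha' : IsPurelyImaginary a) (x y : Octonion) :
    omul (omul a x) (omul a y) = omul a (omul (omul x a) y) :=
  base_case_induction_general a ha' x y
end
end

section
/- Let 𝕆 denote the octonions and for an octonion a let l_a denote left multiplication by a. Let a₁, …, a_n be unitary purely imaginary octonions and g = l_{a₁} ∘ ⋯ ∘ l_{a_n}. If g(1) = 1, where 1 = (1,0) is the octonion unit, then the left-to-right product b = (…((a₁·a₂)·a₃)…)·a_n equals 1. -/
/-!
Conjugation reverses octonion products, and for unitary `a` the map `l_{a*}` inverts `l_a`,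
since `a*·(a·x) = ‖a‖²x` holds in 𝕆 despite non-associativity. Hence
`g⁻¹ = l_{a_n*} ∘ ⋯ ∘ l_{a₁*}`, and `g(1) = 1` gives `a_n*·(⋯(a₁*·1)) = 1`. The left side is
the conjugate of `b`, so `b* = 1` and `b = 1`.
-/

noncomputable section

lemma oconj_oconj (a : Octonion) : oconj (oconj a) = a := by
  simp [oconj]

lemma oconj_oone : oconj oone = oone := by
  simp [oconj, oone]

lemma oconj_omul (a b : Octonion) : oconj (omul a b) = omul (oconj b) (oconj a) := by
  simp only [omul, oconj, Prod.mk.injEq, star_sub, star_mul, star_star, star_neg]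
  constructor <;> noncomm_ring

lemma onormSq_eq_one_of_isUnitary {a : Octonion} (ha : IsUnitary a) : onormSq a = 1 :=
  Real.sqrt_eq_one.mp ha

lemma omul_oconj_omul (a x : Octonion) : omul (oconj a) (omul a x) = onormSq a • x := by
  obtain ⟨a1, a2⟩ := a
  obtain ⟨x1, x2⟩ := x
  have hnormSq : onormSq (a1, a2) = Quaternion.normSq a1 + Quaternion.normSq a2 := by
    simp [onormSq, Quaternion.normSq_eq_norm_mul_self, sq]
  simp only [omul, oconj, hnormSq, Prod.smul_mk, Prod.mk.injEq]
  constructor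
  · calc star a1 * (a1 * x1 - star x2 * a2) - star (x2 * a1 + a2 * star x1) * -a2
        = (star a1 * a1) * x1 + x1 * (star a2 * a2) := by
          simp only [star_add, star_mul, star_star]; noncomm_ring
      _ = _ := by
          rw [Quaternion.star_mul_self, Quaternion.star_mul_self, Quaternion.coe_mul_eq_smul,
            Quaternion.mul_coe_eq_smul, ← add_smul]
  · calc (x2 * a1 + a2 * star x1) * star a1 + -a2 * star (a1 * x1 - star x2 * a2)
        = x2 * (a1 * star a1) + (a2 * star a2) * x2 := by
          simp only [star_sub, star_mul, star_star]; noncomm_ring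
      _ = _ := by
          rw [Quaternion.self_mul_star, Quaternion.self_mul_star, Quaternion.mul_coe_eq_smul,
            Quaternion.coe_mul_eq_smul, ← add_smul]

lemma oconj_omul_cancel_left {a : Octonion} (ha : IsUnitary a) (x : Octonion) :
    omul (oconj a) (omul a x) = x := by
  rw [omul_oconj_omul, onormSq_eq_one_of_isUnitary ha, one_smul]

lemma foldr_map_oconj_reverse_foldr_cancel (l : List Octonion) (hl : ∀ a ∈ l, IsUnitary a)
    (x : Octonion) : ((l.map oconj).reverse).foldr omul (l.foldr omul x) = x := by
  induction l with
  | nil => rfl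
  | cons a t ih =>
    simp only [List.map_cons, List.reverse_cons, List.foldr_append, List.foldr_cons,
      List.foldr_nil, oconj_omul_cancel_left (hl a List.mem_cons_self)]
    exact ih fun b hb => hl b (List.mem_cons_of_mem a hb)

lemma oconj_foldl_omul (l : List Octonion) (x : Octonion) :
    oconj (l.foldl omul x) = ((l.map oconj).reverse).foldr omul (oconj x) := by
  induction l generalizing x with
  | nil => rfl
  | cons a t ih =>
    simp only [List.foldl_cons, List.map_cons, List.reverse_cons, List.foldr_append,
      List.foldr_cons, List.foldr_nil, ih, oconj_omul]

/-- If g = l_{a₁} ∘ ⋯ ∘ l_{a_n} with the aᵢ unitary purely imaginary octonions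
and g(1) = 1, then the left-to-right product b = (…((a₁·a₂)·a₃)…)·a_n equals 1. -/
theorem prod_eq_one_of_fix_one (l : List Octonion)
    (h : ∀ a ∈ l, IsUnitary a ∧ IsPurelyImaginary a)
    (hg : l.foldr omul oone = oone) :
    l.foldl omul oone = oone := by
  have hinv := foldr_map_oconj_reverse_foldr_cancel l (fun a ha => (h a ha).1) oone
  rw [hg] at hinv
  have hconj : oconj (l.foldl omul oone) = oone := by
    rw [oconj_foldl_omul, oconj_oone, hinv]
  rw [← oconj_oconj (l.foldl omul oone), hconj, oconj_oone]
end
end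

section
/- Let 𝕆 denote the octonions, realized as pairs of quaternions. For unit quaternions a, b (‖a‖ = ‖b‖ = 1), define γ_{a,b} : 𝕆 → 𝕆 by γ_{a,b}(x, y) = (a x ā, b y ā), where x, y ∈ ℍ. Then γ_{a,b} is an automorphism of the octonion algebra: γ_{a,b}((x,y)·(x',y')) = γ_{a,b}(x,y) · γ_{a,b}(x',y') for all octonions (x,y), (x',y'). -/
noncomputable section

/-- The map γ_{a,b}(x, y) = (a x ā, b y ā) on the octonions, for quaternions a, b. -/
def gamma (a b : Quaternion ℝ) (z : Octonion) : Octonion :=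
  (a * z.1 * star a, b * z.2 * star a)

/-- For unit quaternions a, b, the map γ_{a,b} is an automorphism of the
octonion algebra. -/
theorem gamma_automorphism (a b : Quaternion ℝ) (ha : ‖a‖ = 1) (hb : ‖b‖ = 1)
    (z w : Octonion) :
    gamma a b (omul z w) = omul (gamma a b z) (gamma a b w) := by
  have hA : star a * a = 1 := by
    rw [Quaternion.star_mul_self, Quaternion.normSq_eq_norm_mul_self, ha, one_mul]
    exact_mod_cast rfl
  have hA' : a * star a = 1 := by
    rw [Quaternion.self_mul_star, Quaternion.normSq_eq_norm_mul_self, ha, one_mul]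
    exact_mod_cast rfl
  have hB : star b * b = 1 := by
    rw [Quaternion.star_mul_self, Quaternion.normSq_eq_norm_mul_self, hb, one_mul]
    exact_mod_cast rfl
  have h1 : ∀ x : Quaternion ℝ, star a * (a * x) = x := fun x => by
    rw [← mul_assoc, hA, one_mul]
  have h2 : ∀ x : Quaternion ℝ, a * (star a * x) = x := fun x => by
    rw [← mul_assoc, hA', one_mul]
  have h3 : ∀ x : Quaternion ℝ, star b * (b * x) = x := fun x => by
    rw [← mul_assoc, hB, one_mul]
  simp only [gamma, omul, Prod.mk.injEq, star_mul, star_star, mul_sub, sub_mul,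
    mul_add, add_mul, mul_assoc, h1, h2, h3]
end
end

section
/- Let γ_{a,b} : ℍ × ℍ → ℍ × ℍ be defined for unit quaternions a, b by γ_{a,b}(x, y) = (a x ā, b y ā). Then γ_{a,b} is the identity map if and only if (a, b) = (1, 1) or (a, b) = (−1, −1). In other words, the kernel of the homomorphism γ : SU(2) × SU(2) → G₂ is the subgroup ℤ₂ = {(1,1), (−1,−1)}. -/
noncomputable section

open Quaternion

namespace Quaternion

theorem eq_coe_re_of_forall_mul_comm {R : Type*} [CommRing R] [IsAddTorsionFree R] {a : ℍ[R]}
    (h : ∀ x : ℍ[R], a * x = x * a) : a = a.re := by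
  obtain ⟨hK, hJ⟩ : a.imK = 0 ∧ a.imJ = 0 := by
    simpa [Quaternion.ext_iff, self_eq_neg, neg_eq_self] using h ((equivProd R).symm (0, 1, 0, 0))
  have hI : a.imI = 0 := by
    simpa [Quaternion.ext_iff, hK, self_eq_neg] using h ((equivProd R).symm (0, 0, 1, 0))
  ext <;> simp [hI, hJ, hK]

theorem star_mul_self_eq_one_of_norm_eq_one {a : ℍ[ℝ]} (ha : ‖a‖ = 1) : star a * a = 1 := by
  rw [star_mul_self, normSq_eq_norm_mul_self, ha, mul_one, coe_one]

theorem eq_one_or_eq_neg_one_of_norm_eq_one {a : ℍ[ℝ]} (ha : ‖a‖ = 1) (hre : a = a.re) :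
    a = 1 ∨ a = -1 := by
  rw [hre, norm_coe, Real.norm_eq_abs] at ha
  rcases abs_eq zero_le_one |>.mp ha with h | h <;> rw [hre, h] <;> simp

theorem eq_one_or_eq_neg_one_of_forall_mul_mul_star_eq {a : ℍ[ℝ]} (ha : ‖a‖ = 1)
    (h : ∀ x, a * x * star a = x) : a = 1 ∨ a = -1 := by
  have hinv := star_mul_self_eq_one_of_norm_eq_one ha
  have hcomm (x : ℍ[ℝ]) : a * x = x * a := by
    calc a * x = a * x * (star a * a) := by rw [hinv, mul_one]
      _ = x * a := by rw [← mul_assoc, h]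
  exact eq_one_or_eq_neg_one_of_norm_eq_one ha (eq_coe_re_of_forall_mul_comm hcomm)

end Quaternion

theorem gamma_kernel_general (a b : Quaternion ℝ) (ha : ‖a‖ = 1) :
    gamma a b = id ↔ (a = 1 ∧ b = 1) ∨ (a = -1 ∧ b = -1) := by
  constructor
  · intro h
    have hconj (x : ℍ[ℝ]) : a * x * star a = x := congrArg Prod.fst (congrFun h (x, 0))
    have hb : b * star a = 1 := by simpa [gamma] using congrArg Prod.snd (congrFun h (0, 1))
    have hba : b = a := left_inv_eq_right_inv hb (star_mul_self_eq_one_of_norm_eq_one ha)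
    rcases eq_one_or_eq_neg_one_of_forall_mul_mul_star_eq ha hconj with rfl | rfl <;> simp [hba]
  · rintro (⟨rfl, rfl⟩ | ⟨rfl, rfl⟩) <;> funext z <;> simp [gamma]

/-- The kernel of γ : SU(2) × SU(2) → G₂ is ℤ₂ = {(1,1), (−1,−1)}: for unit
quaternions a, b, the map γ_{a,b} is the identity iff (a,b) = (1,1) or
(a,b) = (−1,−1). -/
theorem gamma_kernel (a b : Quaternion ℝ) (ha : ‖a‖ = 1) (hb : ‖b‖ = 1) :
    gamma a b = id ↔ (a = 1 ∧ b = 1) ∨ (a = -1 ∧ b = -1) :=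
  gamma_kernel_general a b ha
end
end
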